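/- Let G be an infinite graph, v ∈ V(G), F ⊆ V(G) finite, and suppose C and C' are two distinct connected components of G − F such that C_v ∩ C contains a ray t and C_v ∩ C' contains a ray t' (i.e., t passes through infinitely many vertices of C_v ∩ C, and similarly for t'). Then t and t' are edge-equivalent but not vertex-equivalent. -/
import Mathlib


open SimpleGraph

variable {V : Type*}

/-- A ray in `G`: a one-way infinite path. -/
structure GraphRay (G : SimpleGraph V) where
  f : ℕ → V
  inj : Function.Injective f
  adj : ∀ n, G.Adj (f n) (f (n + 1))

/-- Rays `r` and `s` are edge-equivalent: for every finite edge set `F`,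
they have tails in the same connected component of `G - F`. -/
def RayEdgeEquiv (G : SimpleGraph V) (r s : GraphRay G) : Prop :=
  ∀ F : Finset (Sym2 V), ∃ N, ∀ m ≥ N, ∀ n ≥ N,
    (G.deleteEdges ↑F).Reachable (r.f m) (s.f n)

/-- Rays `r` and `s` are vertex-equivalent: for every finite vertex set `X`,
they have tails in the same connected component of `G - X`. -/
def RayVertexEquiv (G : SimpleGraph V) (r s : GraphRay G) : Prop :=
  ∀ X : Finset V, ∃ N, ∀ m ≥ N, ∀ n ≥ N,
    ∃ (hm : r.f m ∈ ((↑X : Set V)ᶜ)) (hn : s.f n ∈ ((↑X : Set V)ᶜ)),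
      (G.induce ((↑X : Set V)ᶜ)).Reachable ⟨r.f m, hm⟩ ⟨s.f n, hn⟩

/-- Vertices `u` and `v` are edge-equivalent: for every finite edge set `F`,
they lie in the same connected component of `G - F`. -/
def VertexEdgeEquiv (G : SimpleGraph V) (u v : V) : Prop :=
  ∀ F : Finset (Sym2 V), (G.deleteEdges ↑F).Reachable u v

/-- The edge-equivalence class of a vertex `v`. -/
def edgeClass (G : SimpleGraph V) (v : V) : Set V := {u | VertexEdgeEquiv G v u}

/-- `v` edge-dominates the ray `r`: for every finite edge set `F`, `r` has a tail
in the same connected component of `G - F` as `v`. -/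
def EdgeDominates (G : SimpleGraph V) (v : V) (r : GraphRay G) : Prop :=
  ∀ F : Finset (Sym2 V), ∃ N, ∀ n ≥ N, (G.deleteEdges ↑F).Reachable v (r.f n)

/-- `v` dominates the ray `r`: there are infinitely many `v`–`r` paths,
pairwise disjoint except at `v`. -/
def Dominates (G : SimpleGraph V) (v : V) (r : GraphRay G) : Prop :=
  ∃ k : ℕ → ℕ, StrictMono k ∧
    ∃ P : ∀ n, G.Walk v (r.f (k n)),
      (∀ n, (P n).IsPath) ∧
      ∀ m n, m ≠ n → ∀ x, x ∈ (P m).support → x ∈ (P n).support → x = v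

/-- A set `S` of vertices contains the ray `t`: `t` passes through infinitely
many vertices of `S`. -/
def SetContainsRay (G : SimpleGraph V) (S : Set V) (t : GraphRay G) : Prop :=
  {n : ℕ | t.f n ∈ S}.Infinite

/-- A tail of a ray is connected in `G - L` for any finite edge set `L`. -/
lemma ray_tail_reachable (G : SimpleGraph V) (t : GraphRay G) (L : Finset (Sym2 V)) :
    ∃ N, ∀ n ≥ N, (G.deleteEdges ↑L).Reachable (t.f N) (t.f n) := by
  have hinj : Function.Injective (fun n => s(t.f n, t.f (n + 1))) := by
    intro m n h
    simp only [Sym2.eq, Sym2.rel_iff', Prod.mk.injEq, Prod.swap_prod_mk] at h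
    rcases h with ⟨h1, _⟩ | ⟨h1, h2⟩
    · exact t.inj h1
    · have := t.inj h1; have := t.inj h2; omega
  have hfin : {n : ℕ | s(t.f n, t.f (n + 1)) ∈ L}.Finite := by
    have : {n : ℕ | s(t.f n, t.f (n + 1)) ∈ L} =
        (fun n => s(t.f n, t.f (n + 1))) ⁻¹' ↑L := rfl
    rw [this]
    exact Set.Finite.preimage hinj.injOn L.finite_toSet
  obtain ⟨b, hb⟩ := hfin.bddAbove
  refine ⟨b + 1, fun n hn => ?_⟩
  induction n, hn using Nat.le_induction with
  | base => exact SimpleGraph.Reachable.refl _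
  | succ n hn ih =>
    refine ih.trans (SimpleGraph.Adj.reachable ?_)
    rw [SimpleGraph.deleteEdges_adj]
    refine ⟨t.adj n, fun hmem => ?_⟩
    have := hb hmem
    omega

/-- If `C` and `C'` are distinct components of `G - F` and `edgeClass v ∩ C`
contains a ray `t` while `edgeClass v ∩ C'` contains a ray `t'`, then `t` and
`t'` are edge-equivalent but not vertex-equivalent. -/
theorem edgeEquiv_not_vertexEquiv_of_distinct_components
    {V : Type*} [Infinite V] (G : SimpleGraph V) (v : V) (F : Finset V)
    (C C' : (G.induce ((↑F : Set V)ᶜ)).ConnectedComponent) (hCC' : C ≠ C')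
    (t t' : GraphRay G)
    (ht : {n : ℕ | t.f n ∈ edgeClass G v ∧
      ∃ hn : t.f n ∈ ((↑F : Set V)ᶜ),
        (G.induce ((↑F : Set V)ᶜ)).connectedComponentMk ⟨t.f n, hn⟩ = C}.Infinite)
    (ht' : {n : ℕ | t'.f n ∈ edgeClass G v ∧
      ∃ hn : t'.f n ∈ ((↑F : Set V)ᶜ),
        (G.induce ((↑F : Set V)ᶜ)).connectedComponentMk ⟨t'.f n, hn⟩ = C'}.Infinite) :
    RayEdgeEquiv G t t' ∧ ¬ RayVertexEquiv G t t' := by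
  constructor
  · intro L
    obtain ⟨N₁, hN₁⟩ := ray_tail_reachable G t L
    obtain ⟨N₂, hN₂⟩ := ray_tail_reachable G t' L
    obtain ⟨a, ha, haN⟩ := ht.exists_gt N₁
    obtain ⟨b, hb, hbN⟩ := ht'.exists_gt N₂
    refine ⟨max N₁ N₂, fun m hm n hn => ?_⟩
    have h1 : (G.deleteEdges ↑L).Reachable (t.f m) (t.f a) :=
      ((hN₁ m (le_trans (le_max_left _ _) hm)).symm).trans (hN₁ a haN.le)
    have h2 : (G.deleteEdges ↑L).Reachable (t'.f b) (t'.f n) :=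
      ((hN₂ b hbN.le).symm).trans (hN₂ n (le_trans (le_max_right _ _) hn))
    have hv1 : (G.deleteEdges ↑L).Reachable v (t.f a) := ha.1 L
    have hv2 : (G.deleteEdges ↑L).Reachable v (t'.f b) := hb.1 L
    exact h1.trans (hv1.symm.trans (hv2.trans h2))
  · intro hVE
    obtain ⟨N, hN⟩ := hVE F
    obtain ⟨m, hm, hmN⟩ := ht.exists_gt N
    obtain ⟨n, hn, hnN⟩ := ht'.exists_gt N
    obtain ⟨hm', hn', hr⟩ := hN m hmN.le n hnN.le
    obtain ⟨_, _, hmC⟩ := hm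
    obtain ⟨_, _, hnC⟩ := hn
    exact hCC' (hmC.symm.trans ((SimpleGraph.ConnectedComponent.sound hr).trans hnC))
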